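/- Let E be a complex Banach lattice and let T be a positive, irreducible bounded linear operator on E with spectral radius r(T) = 1. Assume that the peripheral point spectrum of T is non-empty and that T is (WS)-bounded. Then: (a) for every x ∈ E with x > 0 one has T^k x ↛ 0 as k → ∞; and (b) whenever z ∈ ker(λ − T) for a peripheral eigenvalue λ of T, then |z| ∈ ker(1 − T), i.e. T|z| = |z|. -/

import Mathlib

open Filter Topology Asymptotics

noncomputable section

/-- A complex Banach lattice, axiomatized via its order (given by the positive cone),
its modulus map `cabs` and its canonical conjugation `conj`. -/
class ComplexBanachLattice (E : Type*) extends
    NormedAddCommGroup E, NormedSpace ℂ E, CompleteSpace E, PartialOrder E where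
  /-- the modulus map `z ↦ |z|` -/
  cabs : E → E
  /-- the canonical conjugation of the complex Banach lattice -/
  conj : E → E
  add_le_add_left' : ∀ a b : E, a ≤ b → ∀ c : E, c + a ≤ c + b
  smul_nonneg' : ∀ (r : ℝ) (x : E), 0 ≤ r → 0 ≤ x → 0 ≤ (r : ℂ) • x
  isClosed_nonneg : IsClosed {x : E | 0 ≤ x}
  cabs_nonneg : ∀ x : E, 0 ≤ cabs x
  cabs_of_nonneg : ∀ x : E, 0 ≤ x → cabs x = x
  cabs_eq_zero_iff : ∀ x : E, cabs x = 0 ↔ x = 0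
  cabs_smul : ∀ (c : ℂ) (x : E), cabs (c • x) = (‖c‖ : ℂ) • cabs x
  cabs_add_le : ∀ x y : E, cabs (x + y) ≤ cabs x + cabs y
  norm_cabs : ∀ x : E, ‖cabs x‖ = ‖x‖
  norm_mono : ∀ x y : E, cabs x ≤ cabs y → ‖x‖ ≤ ‖y‖
  conj_add : ∀ x y : E, conj (x + y) = conj x + conj y
  conj_smul : ∀ (c : ℂ) (x : E), conj (c • x) = (starRingEnd ℂ c) • conj x
  conj_conj : ∀ x : E, conj (conj x) = x
  conj_of_nonneg : ∀ x : E, 0 ≤ x → conj x = x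
  cabs_conj : ∀ x : E, cabs (conj x) = cabs x
  cabs_isLUB : ∀ x : E, conj x = x → IsLUB {x, -x} (cabs x)
  exists_lub : ∀ x y : E, conj x = x → conj y = y → ∃ z : E, IsLUB {x, y} z

open ComplexBanachLattice

/-- A bounded linear operator on a complex Banach lattice is positive
if it maps positive elements to positive elements. -/
def IsPosOp {E : Type*} [ComplexBanachLattice E] (T : E →L[ℂ] E) : Prop :=
  ∀ x : E, 0 ≤ x → 0 ≤ T x

/-- A closed ideal of a complex Banach lattice: a closed (complex) vector subspace
which is solid with respect to the modulus. -/
def IsClosedIdeal {E : Type*} [ComplexBanachLattice E] (I : Set E) : Prop :=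
  IsClosed I ∧ (0 : E) ∈ I ∧
  (∀ x ∈ I, ∀ y ∈ I, x + y ∈ I) ∧
  (∀ (c : ℂ), ∀ x ∈ I, c • x ∈ I) ∧
  (∀ x ∈ I, ∀ y : E, cabs y ≤ cabs x → y ∈ I)

/-- `T` is (WS)-bounded: there is a weighting scheme `(f_j)_{j ∈ J}` (described via the
coefficients `a j : ℕ → ℝ` of the power series expansions `f_j(z) = ∑ₖ a_{j,k} zᵏ`, which are
nonnegative, sum to `1`, are summable against some radius `ρ_j > 1` — i.e. `f_j` is analytic
on a neighbourhood of the closed unit disc — and tend to `0` coefficientwise along the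
directed index set `J`) such that the net `f_j(T) = ∑ₖ a_{j,k} Tᵏ` (given by the analytic
functional calculus) is bounded in operator norm. -/
def IsWSBounded {E : Type*} [ComplexBanachLattice E] (T : E →L[ℂ] E) : Prop :=
  ∃ (J : Type) (p : Preorder J),
    Nonempty J ∧
    (∀ i j : J, ∃ k : J, @LE.le J p.toLE i k ∧ @LE.le J p.toLE j k) ∧
    ∃ (a : J → ℕ → ℝ) (fT : J → E →L[ℂ] E),
      (∀ j k, 0 ≤ a j k) ∧
      (∀ j, HasSum (fun k => a j k) 1) ∧
      (∀ j, ∃ ρ : ℝ, 1 < ρ ∧ Summable (fun k => a j k * ρ ^ k)) ∧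
      (∀ k : ℕ, Filter.Tendsto (fun j => a j k) (@Filter.atTop J p) (𝓝 0)) ∧
      (∀ j, HasSum (fun k : ℕ => ((a j k : ℂ)) • T ^ k) (fT j)) ∧
      (∃ C : ℝ, ∀ j, ‖fT j‖ ≤ C)

/-- A positive operator is irreducible if its only closed invariant ideals
are `{0}` and `E`. -/
def IsIrreducibleOp {E : Type*} [ComplexBanachLattice E] (T : E →L[ℂ] E) : Prop :=
  ∀ I : Set E, IsClosedIdeal I → (∀ x ∈ I, T x ∈ I) → I = {0} ∨ I = Set.univ

/-!
A positive operator satisfies `|Tz| ≤ T|z|`, so a peripheral eigenvector `z` gives a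
sub-invariant vector `u = |z| ≤ Tu`. Along an ultrafilter, `φ ∘ f_j(T)` converges weakly to a
positive functional `ψ` with `ψ ≥ φ` on sub-invariant vectors, and `ψ` vanishes on every orbit
`(Tᵏv)` that is weakly null, the weights of `f_j` escaping to infinity. If `v > 0`, irreducibility
makes the ideal generated by the orbit of `v` dense, so `ψ = 0` on positive vectors: hence no
nonzero sub-invariant vector coexists with a weakly null orbit `v > 0`. For (a) take `u = |z|`;
for (b) take `v = Tu - u`, whose orbit is weakly null because (WS)-boundedness keeps the
increasing sequence `Tᵏu` bounded.

The axioms describe `|z|` for non-real `z` only weakly, so `|Tz| ≤ T|z|` rests on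
`|z| = sup_{|c| = 1} |Re (c z)|`, which is proved by a chain argument in the real part `E_ℝ`,
a distributive lattice.
-/

section LatticeLemmas

lemma abs_add_abs_eq_sup {α : Type*} [Lattice α] [AddCommGroup α] [AddLeftMono α] (a b : α) :
    |a| + |b| = |a + b| ⊔ |a - b| := by
  simp only [abs, sup_add, add_sup, neg_add, sub_eq_add_neg, neg_neg]
  ac_rfl

variable {α : Type*} [DistribLattice α]

lemma inf_le_of_chain {A B : ℕ → α} {x y : α} {n : ℕ} (hcover : ∀ k ≤ n, x ≤ A k ⊔ B k)
    (hAB : ∀ k < n, A k ⊓ B (k + 1) ≤ y) (hA : A 0 ⊓ A n ≤ y) : x ⊓ A 0 ≤ y := by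
  have key : ∀ m ≤ n, x ⊓ A 0 ≤ A m ⊔ y := by
    intro m hm
    induction m with
    | zero => exact le_sup_of_le_left inf_le_right
    | succ m ih =>
      calc x ⊓ A 0 ≤ (A m ⊔ y) ⊓ (A (m + 1) ⊔ B (m + 1)) :=
            le_inf (ih (by omega)) (inf_le_left.trans (hcover _ hm))
        _ = (A m ⊔ y) ⊓ A (m + 1) ⊔ (A m ⊓ B (m + 1) ⊔ y ⊓ B (m + 1)) := by
            rw [inf_sup_left (A m ⊔ y), inf_sup_right (A m) y (B (m + 1))]
        _ ≤ A (m + 1) ⊔ y :=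
            sup_le_sup inf_le_right (sup_le (hAB m (by omega)) inf_le_left)
  calc x ⊓ A 0 ≤ A 0 ⊓ (A n ⊔ y) := le_inf inf_le_right (key n le_rfl)
    _ ≤ y := by rw [inf_sup_left]; exact sup_le hA inf_le_right

lemma le_of_chain {A B : ℕ → α} {x y : α} {n : ℕ} (hcover : ∀ k ≤ n, x ≤ A k ⊔ B k)
    (hAB : ∀ k < n, A k ⊓ B (k + 1) ≤ y) (hBA : ∀ k < n, B k ⊓ A (k + 1) ≤ y)
    (hA : A 0 ⊓ A n ≤ y) (hB : B 0 ⊓ B n ≤ y) : x ≤ y :=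
  calc x = x ⊓ (A 0 ⊔ B 0) := (inf_eq_left.2 (hcover 0 (Nat.zero_le _))).symm
    _ = x ⊓ A 0 ⊔ x ⊓ B 0 := inf_sup_left _ _ _
    _ ≤ y := sup_le (inf_le_of_chain hcover hAB hA)
        (inf_le_of_chain (fun k hk => (hcover k hk).trans_eq (sup_comm _ _)) hBA hB)

end LatticeLemmas

section AnalysisLemmas

open Complex in
lemma Complex.norm_add_le_and_norm_sub_le {c c' : ℂ} (hc : normSq c = 2) (hc' : normSq c' = 2)
    {s : ℝ} (h : |(c * starRingEnd ℂ c').re| ≤ 2 * s) :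
    ‖c + c'‖ ≤ √(4 + 4 * s) ∧ ‖c - c'‖ ≤ √(4 + 4 * s) := by
  rw [abs_le] at h
  constructor <;> rw [norm_def] <;> apply Real.sqrt_le_sqrt
  · rw [normSq_add, hc, hc']; linarith
  · rw [normSq_sub, hc, hc']; linarith

lemma Complex.mul_pow_mul_conj_mul_pow_succ {ω : ℂ} (hω : ‖ω‖ = 1) (c c' : ℂ) (k : ℕ) :
    c * ω ^ k * starRingEnd ℂ (c' * ω ^ (k + 1)) = c * starRingEnd ℂ c' * starRingEnd ℂ ω := by
  have hk : ω ^ k * starRingEnd ℂ ω ^ k = 1 := by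
    rw [← mul_pow, Complex.mul_conj, Complex.normSq_eq_norm_sq, hω]; simp
  simp only [map_mul, map_pow]
  linear_combination c * starRingEnd ℂ c' * starRingEnd ℂ ω * hk

lemma Complex.conj_pow_eq_of_pow_succ_eq_I {ω : ℂ} (hω : ‖ω‖ = 1) {n : ℕ}
    (hωn : ω ^ (n + 1) = Complex.I) : starRingEnd ℂ ω ^ n = -Complex.I * ω := by
  have h1 : starRingEnd ℂ ω ^ (n + 1) = -Complex.I := by
    rw [← map_pow, hωn, Complex.conj_I]
  have h2 : ω * starRingEnd ℂ ω = 1 := by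
    rw [Complex.mul_conj, Complex.normSq_eq_norm_sq, hω]; simp
  linear_combination ω * h1 - starRingEnd ℂ ω ^ n * h2

/-- The Silverman–Toeplitz theorem. -/
lemma tendsto_tsum_mul_of_tendsto_zero {J : Type*} {l : Filter J} {a : J → ℕ → ℝ}
    (ha : ∀ j k, 0 ≤ a j k) (ha1 : ∀ j, HasSum (a j) 1) (hal : ∀ k, Tendsto (a · k) l (𝓝 0))
    {g : ℕ → ℝ} (hg : Tendsto g atTop (𝓝 0)) :
    Tendsto (fun j => ∑' k, a j k * g k) l (𝓝 0) := by
  obtain ⟨B, hB⟩ := hg.abs.bddAbove_range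
  have hsum : ∀ j, Summable fun k => ‖a j k * g k‖ := fun j =>
    ((ha1 j).summable.mul_right B).of_nonneg_of_le (fun k => norm_nonneg _) fun k => by
      rw [norm_mul, Real.norm_of_nonneg (ha j k)]
      exact mul_le_mul_of_nonneg_left (hB (Set.mem_range_self k)) (ha j k)
  rw [Metric.tendsto_nhds]
  intro ε hε
  obtain ⟨N, hN⟩ := Metric.tendsto_atTop.1 hg (ε / 2) (half_pos hε)
  have hbound : ∀ j, ∑' k, ‖a j k * g k‖ ≤ B * ∑ k ∈ Finset.range N, a j k + ε / 2 * 1 := by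
    intro j
    have hhead : HasSum (fun k => a j k * if k < N then B else 0)
        (B * ∑ k ∈ Finset.range N, a j k) := by
      have : HasSum (fun k => a j k * if k < N then B else 0)
          (∑ k ∈ Finset.range N, a j k * if k < N then B else 0) :=
        hasSum_sum_of_ne_finset_zero fun k hk => by rw [if_neg (by simpa using hk), mul_zero]
      convert this using 1
      rw [Finset.mul_sum]
      exact Finset.sum_congr rfl fun k hk => by simp [Finset.mem_range.1 hk, mul_comm]
    refine hasSum_le (fun k => ?_) (hsum j).hasSum (hhead.add ((ha1 j).mul_left (ε / 2)))
    have hgk : ‖g k‖ ≤ B := hB (Set.mem_range_self k)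
    rw [norm_mul, Real.norm_of_nonneg (ha j k)]
    split_ifs with hk
    · nlinarith [ha j k]
    · have : ‖g k‖ < ε / 2 := by simpa using hN k (not_lt.1 hk)
      nlinarith [ha j k]
  have hlim : Tendsto (fun j => B * ∑ k ∈ Finset.range N, a j k + ε / 2 * 1) l (𝓝 (ε / 2)) := by
    simpa using ((tendsto_finsetSum _ fun k _ => hal k).const_mul B).add_const (ε / 2 * 1)
  filter_upwards [hlim.eventually (gt_mem_nhds (half_lt_self hε))] with j hj
  rw [Real.dist_0_eq_abs, ← Real.norm_eq_abs]
  exact ((norm_tsum_le_tsum_norm (hsum j)).trans (hbound j)).trans_lt hj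

lemma exists_ultrafilter_tendsto_apply {F : Type*} [NormedAddCommGroup F] [NormedSpace ℝ F]
    {J : Type*} (l : Filter J) [l.NeBot] (g : J → StrongDual ℝ F) {C : ℝ} (hg : ∀ j, ‖g j‖ ≤ C) :
    ∃ U : Ultrafilter J, ↑U ≤ l ∧
      ∃ ψ : StrongDual ℝ F, ∀ y, Tendsto (fun j => g j y) U (𝓝 (ψ y)) := by
  let U := Ultrafilter.of l
  obtain ⟨ψ, -, hψ⟩ :=
    (WeakDual.isCompact_closedBall (𝕜 := ℝ) (0 : StrongDual ℝ F) C).ultrafilter_le_nhds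
      (U.map fun j => StrongDual.toWeakDual (g j))
      (le_principal_iff.2 (Ultrafilter.mem_map.2 (univ_mem' fun j => by simpa using hg j)))
  exact ⟨U, Ultrafilter.of_le l, WeakDual.toStrongDual ψ,
    fun y => ((WeakDual.eval_continuous y).tendsto ψ).comp hψ⟩

end AnalysisLemmas

namespace ComplexBanachLattice

open ComplexStarModule Complex

variable {E : Type*} [ComplexBanachLattice E]

instance : IsOrderedAddMonoid E where
  add_le_add_left a b h c := by simpa only [add_comm c] using add_le_add_left' a b h c

instance : PosSMulMono ℝ E :=
  .of_smul_nonneg fun r hr x hx => by simpa only [Complex.coe_smul] using smul_nonneg' r x hr hx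

instance : OrderClosedTopology E where
  isClosed_le' := by
    convert (isClosed_nonneg (E := E)).preimage (continuous_snd.sub continuous_fst) using 1
    ext; simp [sub_nonneg]

/- With the conjugation as `star`, `selfAdjoint E` is the real part `E_ℝ` and Mathlib's
`ℜ`, `ℑ` are the real and imaginary parts of `z = ℜ z + i ℑ z`. -/
instance : StarAddMonoid E where
  star := conj
  star_involutive := conj_conj
  star_add := conj_add

instance : StarModule ℂ E := ⟨conj_smul⟩

lemma star_eq_conj (x : E) : star x = conj x := rfl

abbrev RealPart (E : Type*) [ComplexBanachLattice E] := selfAdjoint E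

instance : PosSMulMono ℝ (RealPart E) :=
  .of_smul_nonneg fun _ hr x hx => (smul_nonneg hr (show (0 : E) ≤ x from hx) :)

lemma mem_selfAdjoint_of_nonneg {x : E} (hx : 0 ≤ x) : x ∈ selfAdjoint E :=
  conj_of_nonneg x hx

def modulus (z : E) : RealPart E := ⟨cabs z, mem_selfAdjoint_of_nonneg (cabs_nonneg z)⟩

@[simp] lemma coe_modulus (z : E) : (modulus z : E) = cabs z := rfl

lemma modulus_isLUB (x : RealPart E) : IsLUB {x, -x} (modulus (x : E)) := by
  have h := cabs_isLUB (x : E) x.2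
  refine ⟨?_, fun v hv => ?_⟩
  · rintro _ (rfl | rfl)
    exacts [h.1 (by simp), h.1 (by simp)]
  · exact h.2 (by
      rintro _ (rfl | rfl)
      exacts [hv (Set.mem_insert _ _), hv (Set.mem_insert_of_mem _ rfl)])

/-- `{x, y}` is the translate of `{w, -w}` by the midpoint of `x` and `y`, where
`w = (x - y) / 2`. -/
def realPartSup (x y : RealPart E) : RealPart E :=
  (2⁻¹ : ℝ) • (x + y) + modulus ((2⁻¹ : ℝ) • (x - y) : E)

lemma isLUB_realPartSup (x y : RealPart E) : IsLUB {x, y} (realPartSup x y) := by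
  have h := (OrderIso.addLeft ((2⁻¹ : ℝ) • (x + y))).isLUB_image'.2
    (modulus_isLUB ((2⁻¹ : ℝ) • (x - y)))
  rw [Set.image_pair] at h
  have hx : (2⁻¹ : ℝ) • (x + y) + (2⁻¹ : ℝ) • (x - y) = x := by module
  have hy : (2⁻¹ : ℝ) • (x + y) + -((2⁻¹ : ℝ) • (x - y)) = y := by module
  simp only [OrderIso.addLeft_apply, hx, hy] at h
  exact h

instance : Lattice (RealPart E) :=
  { (inferInstance : PartialOrder (RealPart E)) with
    sup := realPartSup
    le_sup_left := fun x y => (isLUB_realPartSup x y).1 (by simp)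
    le_sup_right := fun x y => (isLUB_realPartSup x y).1 (by simp)
    sup_le := fun x y z hx hy =>
      (isLUB_realPartSup x y).2 (by rintro _ (rfl | rfl) <;> assumption)
    inf := fun x y => -realPartSup (-x) (-y)
    inf_le_left := fun x y => neg_le.2 ((isLUB_realPartSup _ _).1 (by simp))
    inf_le_right := fun x y => neg_le.2 ((isLUB_realPartSup _ _).1 (by simp))
    le_inf := fun x y z hx hy =>
      le_neg.2 ((isLUB_realPartSup _ _).2 (by rintro _ (rfl | rfl) <;> simpa [neg_le_neg_iff])) }

instance : DistribLattice (RealPart E) := AddCommGroup.toDistribLattice _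

lemma modulus_coe (x : RealPart E) : modulus (x : E) = |x| :=
  (modulus_isLUB x).unique isLUB_pair

@[simp] lemma coe_abs (x : RealPart E) : ((|x| : RealPart E) : E) = cabs (x : E) := by
  rw [← modulus_coe]; rfl

lemma cabs_neg (x : E) : cabs (-x) = cabs x := by
  simpa using cabs_smul (-1) x

lemma modulus_smul (c : ℂ) (z : E) : modulus (c • z) = ‖c‖ • modulus z :=
  Subtype.ext (cabs_smul c z)

lemma abs_realPart_le_modulus (z : E) : |ℜ z| ≤ modulus z := by
  rw [← modulus_coe]
  change cabs (ℜ z : E) ≤ cabs z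
  rw [realPart_apply_coe, ← Complex.coe_smul, cabs_smul, Complex.norm_real,
    Real.norm_of_nonneg (by norm_num), Complex.coe_smul]
  calc (2⁻¹ : ℝ) • cabs (z + star z) ≤ (2⁻¹ : ℝ) • (cabs z + cabs z) :=
        smul_le_smul_of_nonneg_left
          ((cabs_add_le _ _).trans_eq (by rw [star_eq_conj, cabs_conj])) (by norm_num)
    _ = cabs z := by module

lemma abs_realPart_smul_le (c : ℂ) (z : E) : |ℜ (c • z)| ≤ ‖c‖ • modulus z :=
  (abs_realPart_le_modulus _).trans_eq (modulus_smul c z)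

lemma modulus_le_abs_realPart_sup (z : E) :
    modulus z ≤ |ℜ ((1 + I) • z)| ⊔ |ℜ ((1 - I) • z)| := by
  have h : modulus z ≤ |ℜ z| + |ℜ (I • z)| := by
    rw [realPart_I_smul, abs_neg]
    change cabs z ≤ ((|ℜ z| : RealPart E) : E) + ((|ℑ z| : RealPart E) : E)
    rw [coe_abs, coe_abs]
    conv_lhs => rw [← realPart_add_I_smul_imaginaryPart z]
    exact (cabs_add_le _ _).trans_eq (by rw [cabs_smul]; simp)
  rw [add_smul, sub_smul, one_smul]
  rwa [abs_add_abs_eq_sup, ← map_add, ← map_sub] at h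

lemma inf_abs_realPart_smul_le {z : E} {w : RealPart E} (h : ∀ c : ℂ, |ℜ (c • z)| ≤ ‖c‖ • w)
    {c c' : ℂ} {S : ℝ} (h₁ : ‖c + c'‖ ≤ S) (h₂ : ‖c - c'‖ ≤ S) :
    |ℜ (c • z)| ⊓ |ℜ (c' • z)| ≤ (2⁻¹ * S) • w := by
  have hw : 0 ≤ w := by simpa using (abs_nonneg _).trans (h 1)
  have hsup : |ℜ ((c + c') • z)| ⊔ |ℜ ((c - c') • z)| ≤ S • w :=
    sup_le ((h _).trans (smul_le_smul_of_nonneg_right h₁ hw))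
      ((h _).trans (smul_le_smul_of_nonneg_right h₂ hw))
  rw [add_smul, sub_smul, map_add, map_sub, ← abs_add_abs_eq_sup] at hsup
  rw [mul_smul, le_inv_smul_iff_of_pos two_pos, two_smul]
  exact (add_le_add inf_le_left inf_le_right).trans hsup

/-- The chain is formed by `A k = |Re ((1 - i) ωᵏ z)|` and `B k = |Re ((1 + i) ωᵏ z)|`; since
`ω ^ (n + 1) = i`, the crossing pairs and the pairs of endpoints have `|Re (c c̄')| = 2 |Im ω|`,
so they are nearly orthogonal when `ω` is close to `1`. -/
lemma modulus_le_smul_of_pow_eq_I {z : E} {w : RealPart E}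
    (h : ∀ c : ℂ, |ℜ (c • z)| ≤ ‖c‖ • w) {ω : ℂ} (hω : ‖ω‖ = 1) {n : ℕ} (hωn : ω ^ (n + 1) = I) :
    modulus z ≤ (2⁻¹ * √(4 + 4 * |ω.im|)) • w := by
  set d : ℕ → ℂ := fun k => (1 - I) * ω ^ k
  set e : ℕ → ℂ := fun k => (1 + I) * ω ^ k
  have hnormSq : ∀ k, normSq (d k) = 2 ∧ normSq (e k) = 2 := fun k => by
    have : normSq ω = 1 := by rw [normSq_eq_norm_sq, hω, one_pow]
    simp only [d, e, map_mul, map_pow, this, one_pow, mul_one]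
    constructor <;> simp [normSq_apply] <;> norm_num
  have hpair : ∀ c c', normSq c = 2 → normSq c' = 2 → |(c * starRingEnd ℂ c').re| ≤ 2 * |ω.im| →
      |ℜ (c • z)| ⊓ |ℜ (c' • z)| ≤ (2⁻¹ * √(4 + 4 * |ω.im|)) • w := fun c c' hc hc' hcc' =>
    inf_abs_realPart_smul_le h (norm_add_le_and_norm_sub_le hc hc' hcc').1
      (norm_add_le_and_norm_sub_le hc hc' hcc').2
  refine le_of_chain (A := fun k => |ℜ (d k • z)|) (B := fun k => |ℜ (e k • z)|) (n := n)
    (fun k _ => ?_) (fun k _ => hpair _ _ (hnormSq k).1 (hnormSq _).2 ?_)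
    (fun k _ => hpair _ _ (hnormSq k).2 (hnormSq _).1 ?_)
    (hpair _ _ (hnormSq 0).1 (hnormSq n).1 ?_) (hpair _ _ (hnormSq 0).2 (hnormSq n).2 ?_)
  · calc modulus z = modulus (ω ^ k • z) := by
          rw [modulus_smul, norm_pow, hω, one_pow, one_smul]
      _ ≤ _ := modulus_le_abs_realPart_sup _
      _ = _ := by simp only [smul_smul, d, e, sup_comm]
  iterate 2
    rw [mul_pow_mul_conj_mul_pow_succ hω]
    simp [mul_re, abs_mul]
    norm_num
  all_goals
    simp only [d, e, pow_zero, mul_one, map_mul, map_pow, conj_pow_eq_of_pow_succ_eq_I hω hωn]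
    simp [mul_re]
    ring_nf
    simp [abs_mul]

theorem modulus_le_of_forall_abs_realPart_smul_le {z : E} {w : RealPart E}
    (h : ∀ c : ℂ, |ℜ (c • z)| ≤ ‖c‖ • w) : modulus z ≤ w := by
  set θ : ℕ → ℝ := fun n => Real.pi / 2 * ((n : ℝ) + 1)⁻¹
  set f : ℝ → ℝ := fun t => 2⁻¹ * √(4 + 4 * |Real.sin t|)
  have hle : ∀ n, modulus z ≤ f (θ n) • w := fun n => by
    have := modulus_le_smul_of_pow_eq_I h (norm_exp_ofReal_mul_I (θ n)) (n := n) ?_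
    · rwa [exp_ofReal_mul_I_im] at this
    · rw [← Complex.exp_nat_mul]
      convert exp_pi_div_two_mul_I using 2
      simp only [θ]
      push_cast
      field_simp
  have hf : Tendsto (fun n => f (θ n)) atTop (𝓝 1) := by
    have hθ : Tendsto θ atTop (𝓝 0) := by
      simpa using tendsto_one_div_add_atTop_nhds_zero_nat.const_mul (Real.pi / 2)
    have hf0 : f 0 = 1 := by
      simp only [f, Real.sin_zero, abs_zero, mul_zero, add_zero]
      rw [show (4 : ℝ) = 2 ^ 2 by norm_num, Real.sqrt_sq zero_le_two]
      norm_num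
    rw [← hf0]
    exact ((by fun_prop : Continuous f).tendsto 0).comp hθ
  exact Subtype.coe_le_coe.1 <| ge_of_tendsto (by simpa using hf.smul_const (w : E))
    (Eventually.of_forall fun n => Subtype.coe_le_coe.2 (hle n))

lemma norm_le_norm_of_nonneg_of_le {x y : E} (hx : 0 ≤ x) (hxy : x ≤ y) : ‖x‖ ≤ ‖y‖ :=
  norm_mono _ _ (by rwa [cabs_of_nonneg x hx, cabs_of_nonneg y (hx.trans hxy)])

lemma norm_cabs_sub_cabs_le (x y : E) : ‖cabs x - cabs y‖ ≤ ‖x - y‖ := by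
  have hreal : conj (cabs x - cabs y) = cabs x - cabs y := selfAdjoint.mem_iff.1 <|
    sub_mem (mem_selfAdjoint_of_nonneg (cabs_nonneg x)) (mem_selfAdjoint_of_nonneg (cabs_nonneg y))
  refine norm_mono _ _ ((cabs_isLUB _ hreal).2 ?_)
  rintro _ (rfl | rfl)
  · simpa using cabs_add_le (x - y) y
  · rw [← cabs_neg (x - y), neg_sub]
    simpa using cabs_add_le (y - x) x

lemma continuous_cabs : Continuous (cabs : E → E) :=
  LipschitzWith.continuous (K := 1) <| LipschitzWith.of_dist_le_mul fun x y => by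
    simpa [dist_eq_norm] using norm_cabs_sub_cabs_le x y

lemma exists_monotone_functional_pos {x : E} (hx : 0 ≤ x) (hx0 : x ≠ 0) :
    ∃ φ : StrongDual ℝ E, Monotone φ ∧ 0 < φ x := by
  have hx' : -x ∉ ProperCone.positive ℝ E := by
    simpa using fun h => hx0 (le_antisymm (neg_nonneg.1 h) hx)
  obtain ⟨φ, hφ, hφx⟩ := (ProperCone.positive ℝ E).hyperplane_separation_point hx'
  exact ⟨φ, (monotone_iff_map_nonneg φ).2 fun y hy => hφ y hy, by simpa using hφx⟩

end ComplexBanachLattice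

open ComplexBanachLattice ComplexStarModule

section PositiveOperators

variable {E : Type*} [ComplexBanachLattice E] {T : E →L[ℂ] E}

lemma IsPosOp.monotone (hT : IsPosOp T) : Monotone T :=
  (monotone_iff_map_nonneg T).2 hT

lemma IsPosOp.pow (hT : IsPosOp T) (k : ℕ) : IsPosOp (T ^ k) := by
  induction k with
  | zero => simp [IsPosOp]
  | succ k ih => exact fun x hx => by rw [pow_succ', mul_apply_eq_comp]; exact hT _ (ih x hx)

lemma IsPosOp.monotone_pow_apply (hT : IsPosOp T) {u : E} (huT : u ≤ T u) :
    Monotone fun k => (T ^ k) u :=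
  monotone_nat_of_le_succ fun k => by
    simpa only [pow_succ, mul_apply_eq_comp] using (hT.pow k).monotone huT

lemma IsPosOp.map_mem_selfAdjoint (hT : IsPosOp T) {x : E} (hx : x ∈ selfAdjoint E) :
    T x ∈ selfAdjoint E := by
  let y : RealPart E := ⟨x, hx⟩
  have hy : x = ((y⁺ : RealPart E) : E) - ((y⁻ : RealPart E) : E) :=
    congrArg Subtype.val (posPart_sub_negPart y).symm
  rw [hy, map_sub]
  exact sub_mem (mem_selfAdjoint_of_nonneg (hT _ (posPart_nonneg y)))
    (mem_selfAdjoint_of_nonneg (hT _ (negPart_nonneg y)))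

lemma IsPosOp.map_star (hT : IsPosOp T) (x : E) : T (star x) = star (T x) := by
  rw [← realPart_add_I_smul_imaginaryPart x]
  simp only [star_add, star_smul, map_add, map_smul, selfAdjoint.star_val_eq,
    (selfAdjoint.mem_iff.1 (hT.map_mem_selfAdjoint (ℜ x).2)),
    (selfAdjoint.mem_iff.1 (hT.map_mem_selfAdjoint (ℑ x).2))]

lemma IsPosOp.map_realPart (hT : IsPosOp T) (z : E) : T (ℜ z) = ℜ (T z) := by
  rw [realPart_apply_coe, realPart_apply_coe, ContinuousLinearMap.map_smul_of_tower, map_add,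
    hT.map_star]

lemma IsPosOp.cabs_map_le_of_mem_selfAdjoint (hT : IsPosOp T) {x : E} (hx : x ∈ selfAdjoint E) :
    cabs (T x) ≤ T (cabs x) := by
  refine (cabs_isLUB _ (hT.map_mem_selfAdjoint hx)).2 ?_
  rintro _ (rfl | rfl)
  · exact hT.monotone ((cabs_isLUB x hx).1 (by simp))
  · rw [← map_neg]; exact hT.monotone ((cabs_isLUB x hx).1 (by simp))

theorem IsPosOp.cabs_map_le (hT : IsPosOp T) (z : E) : cabs (T z) ≤ T (cabs z) := by
  let w : RealPart E := ⟨T (cabs z), mem_selfAdjoint_of_nonneg (hT _ (cabs_nonneg z))⟩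
  refine Subtype.coe_le_coe.2 (modulus_le_of_forall_abs_realPart_smul_le (w := w) fun c => ?_)
  change ((|ℜ (c • T z)| : RealPart E) : E) ≤ ‖c‖ • T (cabs z)
  rw [coe_abs, ← map_smul, ← hT.map_realPart, ← ContinuousLinearMap.map_smul_of_tower]
  refine (hT.cabs_map_le_of_mem_selfAdjoint (ℜ (c • z)).2).trans (hT.monotone ?_)
  simpa using Subtype.coe_le_coe.2 (abs_realPart_smul_le c z)

lemma IsPosOp.cabs_le_map_cabs (hT : IsPosOp T) {μ : ℂ} {z : E} (hμ : ‖μ‖ = 1)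
    (hz : T z = μ • z) : cabs z ≤ T (cabs z) := by
  simpa [hz, cabs_smul, hμ] using hT.cabs_map_le z

end PositiveOperators

section OrbitIdeal

variable {E : Type*} [ComplexBanachLattice E]

def orbitDualIdeal (T : E →L[ℂ] E) (v : E) : Set E :=
  {y | ∀ φ : StrongDual ℝ E, Monotone φ → (∀ i, φ ((T ^ i) v) = 0) → φ (cabs y) = 0}

lemma isClosedIdeal_orbitDualIdeal (T : E →L[ℂ] E) (v : E) :
    IsClosedIdeal (orbitDualIdeal T v) := by
  have hpos : ∀ {φ : StrongDual ℝ E}, Monotone φ → ∀ y, 0 ≤ φ (cabs y) := fun hφ y =>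
    (monotone_iff_map_nonneg _).1 hφ _ (cabs_nonneg y)
  refine ⟨?_, ?_, ?_, ?_, ?_⟩
  · simp only [orbitDualIdeal, Set.ofPred_forall]
    exact isClosed_iInter fun φ => isClosed_iInter fun _ => isClosed_iInter fun _ =>
      isClosed_eq (φ.continuous.comp continuous_cabs) continuous_const
  · intro φ _ _
    rw [(cabs_eq_zero_iff 0).2 rfl, map_zero]
  · intro x hx y hy φ hφ hv
    refine le_antisymm ?_ (hpos hφ _)
    simpa [hx φ hφ hv, hy φ hφ hv] using hφ (cabs_add_le x y)
  · intro c x hx φ hφ hv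
    rw [cabs_smul, Complex.coe_smul, map_smul, hx φ hφ hv, smul_zero]
  · intro x hx y hyx φ hφ hv
    exact le_antisymm ((hφ hyx).trans_eq (hx φ hφ hv)) (hpos hφ _)

lemma mem_orbitDualIdeal_self (T : E →L[ℂ] E) {v : E} (hv : 0 ≤ v) : v ∈ orbitDualIdeal T v :=
  fun φ _ hφv => by simpa [cabs_of_nonneg v hv] using hφv 0

lemma IsPosOp.mapsTo_orbitDualIdeal {T : E →L[ℂ] E} (hT : IsPosOp T) (v : E) :
    ∀ y ∈ orbitDualIdeal T v, T y ∈ orbitDualIdeal T v := by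
  intro y hy φ hφ hv
  have hφT : Monotone (φ.comp (T.restrictScalars ℝ)) := hφ.comp hT.monotone
  have hyT := hy _ hφT fun i => by
    change φ (T ((T ^ i) v)) = 0
    rw [← mul_apply_eq_comp, ← pow_succ']
    exact hv (i + 1)
  exact le_antisymm ((hφ (hT.cabs_map_le y)).trans_eq hyT)
    ((monotone_iff_map_nonneg _).1 hφ _ (cabs_nonneg _))

lemma IsIrreducibleOp.orbitDualIdeal_eq_univ {T : E →L[ℂ] E} (hirr : IsIrreducibleOp T)
    (hT : IsPosOp T) {v : E} (hv : 0 ≤ v) (hv0 : v ≠ 0) : orbitDualIdeal T v = Set.univ :=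
  (hirr _ (isClosedIdeal_orbitDualIdeal T v) (hT.mapsTo_orbitDualIdeal v)).resolve_left
    fun h => hv0 (by simpa [h] using mem_orbitDualIdeal_self T hv)

end OrbitIdeal

section Weighting

variable {E : Type*} [ComplexBanachLattice E]

/-- `f j` is `f_j(T)` for the weighting scheme `f_j(z) = ∑ₖ a j k zᵏ`, indexed along `l`. -/
structure BoundedWeighting (T : E →L[ℂ] E) {J : Type*} (l : Filter J) (C : ℝ) where
  a : J → ℕ → ℝ
  f : J → E →L[ℂ] E
  nonneg : ∀ j k, 0 ≤ a j k
  hasSum_one : ∀ j, HasSum (a j) 1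
  tendsto_zero : ∀ k, Tendsto (a · k) l (𝓝 0)
  hasSum_apply : ∀ j x, HasSum (fun k => a j k • (T ^ k) x) (f j x)
  norm_le : ∀ j, ‖f j‖ ≤ C

lemma IsWSBounded.exists_boundedWeighting {T : E →L[ℂ] E} (h : IsWSBounded T) :
    ∃ (J : Type) (l : Filter J) (_ : l.NeBot) (C : ℝ), Nonempty (BoundedWeighting T l C) := by
  obtain ⟨J, p, hne, hdir, a, f, ha, ha1, -, hal, hf, C, hC⟩ := h
  let := p
  have : IsDirected J (· ≤ ·) := ⟨hdir⟩
  refine ⟨J, atTop, atTop_neBot_iff.2 ⟨hne, inferInstance⟩, C, ⟨⟨a, f, ha, ha1, hal, ?_, hC⟩⟩⟩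
  intro j x
  simpa using (hf j).mapL (ContinuousLinearMap.apply ℂ E x)

namespace BoundedWeighting

variable {T : E →L[ℂ] E} {J : Type*} {l : Filter J} {C : ℝ}

lemma monotone_apply (W : BoundedWeighting T l C) (hT : IsPosOp T) (j : J) : Monotone (W.f j) :=
  (monotone_iff_map_nonneg _).2 fun x hx =>
    (W.hasSum_apply j x).nonneg fun k => smul_nonneg (W.nonneg j k) (hT.pow k x hx)

lemma le_apply (W : BoundedWeighting T l C) (hT : IsPosOp T) {u : E} (huT : u ≤ T u) (j : J) :
    u ≤ W.f j u := by
  have hu : HasSum (fun k => W.a j k • u) u := by simpa using (W.hasSum_one j).smul_const u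
  refine hasSum_le (fun k => smul_le_smul_of_nonneg_left ?_ (W.nonneg j k)) hu (W.hasSum_apply j u)
  simpa using hT.monotone_pow_apply huT (Nat.zero_le k)

lemma norm_pow_apply_le (W : BoundedWeighting T l C) [l.NeBot] (hT : IsPosOp T) {u : E}
    (hu : 0 ≤ u) (huT : u ≤ T u) (n : ℕ) : ‖(T ^ n) u‖ ≤ 2 * C * ‖u‖ := by
  have hs : Tendsto (fun j => ∑ k ∈ Finset.range n, W.a j k) l (𝓝 0) := by
    simpa using tendsto_finsetSum (Finset.range n) fun k _ => W.tendsto_zero k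
  obtain ⟨j, hj⟩ := (hs.eventually (gt_mem_nhds (show (0 : ℝ) < 2⁻¹ by norm_num))).exists
  set s := ∑ k ∈ Finset.range n, W.a j k
  have htail : (1 - s) • (T ^ n) u ≤ W.f j u - ∑ k ∈ Finset.range n, W.a j k • (T ^ k) u :=
    hasSum_le (fun k => smul_le_smul_of_nonneg_left
        (hT.monotone_pow_apply huT (Nat.le_add_left n k)) (W.nonneg _ _))
      (((hasSum_nat_add_iff' n).2 (W.hasSum_one j)).smul_const _)
      ((hasSum_nat_add_iff' n).2 (W.hasSum_apply j u))
  have hhead : 0 ≤ ∑ k ∈ Finset.range n, W.a j k • (T ^ k) u :=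
    Finset.sum_nonneg fun k _ => smul_nonneg (W.nonneg j k) (hT.pow k u hu)
  have hhalf : (2⁻¹ : ℝ) • (T ^ n) u ≤ W.f j u :=
    calc (2⁻¹ : ℝ) • (T ^ n) u ≤ (1 - s) • (T ^ n) u :=
          smul_le_smul_of_nonneg_right (by linarith) (hT.pow n u hu)
      _ ≤ W.f j u := htail.trans (sub_le_self _ hhead)
  calc ‖(T ^ n) u‖ = 2 * ‖(2⁻¹ : ℝ) • (T ^ n) u‖ := by
        rw [norm_smul, Real.norm_of_nonneg (by norm_num)]; ring
    _ ≤ 2 * ‖W.f j u‖ := by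
        gcongr
        exact norm_le_norm_of_nonneg_of_le (smul_nonneg (by norm_num) (hT.pow n u hu)) hhalf
    _ ≤ 2 * C * ‖u‖ := by
        rw [mul_assoc]
        gcongr
        exact (W.f j).le_of_opNorm_le (W.norm_le j) u

lemma exists_limit_functional (W : BoundedWeighting T l C) [l.NeBot] (hT : IsPosOp T)
    {φ : StrongDual ℝ E} (hφ : Monotone φ) :
    ∃ ψ : StrongDual ℝ E, Monotone ψ ∧ (∀ u, u ≤ T u → φ u ≤ ψ u) ∧
      ∀ v, Tendsto (fun k => φ ((T ^ k) v)) atTop (𝓝 0) → ψ v = 0 := by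
  let g : J → StrongDual ℝ E := fun j => φ.comp ((W.f j).restrictScalars ℝ)
  have hg : ∀ j, ‖g j‖ ≤ ‖φ‖ * C := fun j => (φ.opNorm_comp_le _).trans <| by
    rw [ContinuousLinearMap.norm_restrictScalars]
    exact mul_le_mul_of_nonneg_left (W.norm_le j) (norm_nonneg φ)
  obtain ⟨U, hUl, ψ, hψ⟩ := exists_ultrafilter_tendsto_apply l g hg
  refine ⟨ψ, fun x y hxy => le_of_tendsto_of_tendsto' (hψ x) (hψ y)
      fun j => hφ (W.monotone_apply hT j hxy),
    fun u huT => ge_of_tendsto (hψ u) (Eventually.of_forall fun j => hφ (W.le_apply hT huT j)),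
    fun v hv => tendsto_nhds_unique (hψ v) ?_⟩
  have hgv : ∀ j, g j v = ∑' k, W.a j k * φ ((T ^ k) v) := fun j => by
    change φ (W.f j v) = _
    simpa using ((W.hasSum_apply j v).mapL φ).tsum_eq.symm
  simp only [hgv]
  exact (tendsto_tsum_mul_of_tendsto_zero W.nonneg W.hasSum_one W.tendsto_zero hv).mono_left hUl

lemma tendsto_apply_pow_apply_sub_self (W : BoundedWeighting T l C) [l.NeBot] (hT : IsPosOp T)
    {u : E} (hu : 0 ≤ u) (huT : u ≤ T u) {φ : StrongDual ℝ E} (hφ : Monotone φ) :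
    Tendsto (fun k => φ ((T ^ k) (T u - u))) atTop (𝓝 0) := by
  have hstep : ∀ k, φ ((T ^ k) (T u - u)) = φ ((T ^ (k + 1)) u) - φ ((T ^ k) u) := fun k => by
    rw [map_sub, map_sub, pow_succ, mul_apply_eq_comp]
  refine (summable_of_sum_range_le (c := ‖φ‖ * (2 * C * ‖u‖)) (fun k => ?_)
    fun n => ?_).tendsto_atTop_zero
  · rw [hstep]
    exact sub_nonneg.2 (hφ (hT.monotone_pow_apply huT (Nat.le_succ k)))
  · rw [Finset.sum_congr rfl fun k _ => hstep k, Finset.sum_range_sub (fun k => φ ((T ^ k) u))]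
    have h0 : 0 ≤ φ ((T ^ 0) u) := (monotone_iff_map_nonneg φ).1 hφ _ (by simpa using hu)
    have h1 : φ ((T ^ n) u) ≤ ‖φ‖ * (2 * C * ‖u‖) :=
      (le_abs_self _).trans <| (Real.norm_eq_abs _).symm.trans_le <| (φ.le_opNorm _).trans <|
        mul_le_mul_of_nonneg_left (W.norm_pow_apply_le hT hu huT n) (norm_nonneg φ)
    linarith

end BoundedWeighting

end Weighting

section Irreducible

variable {E : Type*} [ComplexBanachLattice E] {T : E →L[ℂ] E} {J : Type*} {l : Filter J} {C : ℝ}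
  [l.NeBot]

/-- The limit functional `ψ` of `φ ∘ f j` kills the orbit of `v`, hence the closed ideal it
generates, which is all of `E`; but `ψ u ≥ φ u > 0`. -/
theorem IsIrreducibleOp.eq_zero_of_le_map_of_tendsto_zero (hirr : IsIrreducibleOp T)
    (hT : IsPosOp T) (W : BoundedWeighting T l C) {v : E} (hv : 0 ≤ v) (hv0 : v ≠ 0)
    (horb : ∀ φ : StrongDual ℝ E, Monotone φ → Tendsto (fun k => φ ((T ^ k) v)) atTop (𝓝 0))
    {u : E} (hu : 0 ≤ u) (huT : u ≤ T u) : u = 0 := by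
  by_contra hu0
  obtain ⟨φ, hφ, hφu⟩ := exists_monotone_functional_pos hu hu0
  obtain ⟨ψ, hψ, hψu, hψv⟩ := W.exists_limit_functional hT hφ
  have hψorb : ∀ i, ψ ((T ^ i) v) = 0 := fun i => hψv _ <|
    ((horb φ hφ).comp (tendsto_add_atTop_nat i)).congr fun k => by
      simp only [Function.comp_apply, pow_add, mul_apply_eq_comp]
  have hu_mem : u ∈ orbitDualIdeal T v := hirr.orbitDualIdeal_eq_univ hT hv hv0 ▸ trivial
  have hψu0 := hu_mem ψ hψ hψorb
  rw [cabs_of_nonneg u hu] at hψu0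
  linarith [hψu u huT]

theorem IsIrreducibleOp.map_eq_self_of_le_map (hirr : IsIrreducibleOp T) (hT : IsPosOp T)
    (W : BoundedWeighting T l C) {u : E} (hu : 0 ≤ u) (huT : u ≤ T u) : T u = u := by
  by_contra h
  have hu0 := hirr.eq_zero_of_le_map_of_tendsto_zero hT W (sub_nonneg.2 huT) (sub_ne_zero.2 h)
    (fun φ hφ => W.tendsto_apply_pow_apply_sub_self hT hu huT hφ) hu huT
  exact h (by simp [hu0])

end Irreducible

theorem irreducible_ws_bounded_a_b_general
    {E : Type*} [ComplexBanachLattice E] (T : E →L[ℂ] E)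
    (hTpos : IsPosOp T)
    (hirr : IsIrreducibleOp T)
    (hpps : ∃ (μ : ℂ) (z : E), z ≠ 0 ∧ ‖μ‖ = 1 ∧ T z = μ • z)
    (hws : IsWSBounded T) :
    (∀ x : E, 0 ≤ x → x ≠ 0 →
      ¬ Tendsto (fun k : ℕ => (T ^ k) x) atTop (𝓝 0)) ∧
    (∀ (μ : ℂ) (z : E), ‖μ‖ = 1 → z ≠ 0 → T z = μ • z →
      T (cabs z) = cabs z) := by
  obtain ⟨J, l, hl, C, ⟨W⟩⟩ := hws.exists_boundedWeighting
  have hfix : ∀ (μ : ℂ) (z : E), ‖μ‖ = 1 → T z = μ • z → T (cabs z) = cabs z :=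
    fun μ z hμ hz =>
      hirr.map_eq_self_of_le_map hTpos W (cabs_nonneg z) (hTpos.cabs_le_map_cabs hμ hz)
  refine ⟨fun x hx hx0 hlim => ?_, fun μ z hμ _ hz => hfix μ z hμ hz⟩
  obtain ⟨μ, z, hz0, hμ, hz⟩ := hpps
  refine hz0 ((cabs_eq_zero_iff z).1 (hirr.eq_zero_of_le_map_of_tendsto_zero hTpos W hx hx0
    (fun φ _ => ?_) (cabs_nonneg z) (hfix μ z hμ hz).ge))
  simpa [Function.comp_def] using (φ.continuous.tendsto 0).comp hlim

/-- Theorem 5.7(a),(b): let `T` be positive, irreducible and (WS)-bounded with `r(T) = 1`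
and non-empty peripheral point spectrum. Then (a) `Tᵏx ↛ 0` for every `x > 0`, and
(b) whenever `Tz = λz` for a peripheral eigenvalue `λ`, then `T|z| = |z|`. -/
theorem irreducible_ws_bounded_a_b
    {E : Type*} [ComplexBanachLattice E] (T : E →L[ℂ] E)
    (hTpos : IsPosOp T)
    (hirr : IsIrreducibleOp T)
    (hrad : spectralRadius ℂ T = 1)
    (hpps : ∃ (μ : ℂ) (z : E), z ≠ 0 ∧ ‖μ‖ = 1 ∧ T z = μ • z)
    (hws : IsWSBounded T) :
    (∀ x : E, 0 ≤ x → x ≠ 0 →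
      ¬ Tendsto (fun k : ℕ => (T ^ k) x) atTop (𝓝 0)) ∧
    (∀ (μ : ℂ) (z : E), ‖μ‖ = 1 → z ≠ 0 → T z = μ • z →
      T (cabs z) = cabs z) :=
  irreducible_ws_bounded_a_b_general T hTpos hirr hpps hws
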